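/- arXiv:1001.0177 — 4 statements merged into one kernel-verified Lean document; each statement's English description precedes it below -/
import Mathlib

section
/- Let M be a module over ℤ with a symmetric bilinear form ⟨·,·⟩, let n be a natural number, and let Γ, E₁, …, Eₙ ∈ M satisfy ⟨Γ,Γ⟩ = −1, ⟨Eⱼ,Eⱼ⟩ = −2 for all j, ⟨Γ,E₁⟩ = 1, ⟨Γ,Eⱼ⟩ = 0 for j ≥ 2, ⟨Eⱼ,Eₖ⟩ = 1 whenever |j−k| = 1, and ⟨Eⱼ,Eₖ⟩ = 0 whenever |j−k| ≥ 2. Then the element D = (n+1)·Γ + Σ_{j=1}^{n} (n−j+1)·Eⱼ satisfies ⟨D,D⟩ = −(n+1). -/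
/-!
Write `Fᵢ = Γ + E₁ + ⋯ + Eᵢ` for `0 ≤ i ≤ n`; then `D = F₀ + F₁ + ⋯ + Fₙ`. Adding `Eᵢ₊₁` to `Fᵢ`
preserves the self-intersection `-1`, since `⟨Fᵢ, Eᵢ₊₁⟩ = 1` (only the last curve of `Fᵢ` meets
`Eᵢ₊₁`) while `⟨Fᵢ, Eⱼ⟩ = 0` for `j > i + 1`. The same two facts make the `Fᵢ` pairwise
orthogonal, so `D² = F₀² + ⋯ + Fₙ² = -(n + 1)`.
-/

open Finset LinearMap.BilinForm

section

variable {R M : Type*} [CommRing R] [AddCommGroup M] [Module R M]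

def chainPartialSum (Γ : M) (e : ℕ → M) (i : ℕ) : M := Γ + ∑ j ∈ range i, e j

theorem chainPartialSum_succ (Γ : M) (e : ℕ → M) (i : ℕ) :
    chainPartialSum Γ e (i + 1) = chainPartialSum Γ e i + e i := by
  simp only [chainPartialSum, sum_range_succ, add_assoc]

theorem sum_range_chainPartialSum (Γ : M) (e : ℕ → M) (n : ℕ) :
    ∑ i ∈ range (n + 1), chainPartialSum Γ e i
      = ((n : R) + 1) • Γ + ∑ j ∈ range n, ((n : R) - j) • e j := by
  induction n with
  | zero => simp [chainPartialSum]
  | succ n ih =>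
    have hcoef : ∀ j ∈ range (n + 1), (((n + 1 : ℕ) : R) - j) • e j = ((n : R) - j) • e j + e j :=
      fun j _ => by push_cast; module
    rw [sum_range_succ, ih, sum_congr rfl hcoef, sum_add_distrib, sum_range_succ _ n]
    simp only [chainPartialSum]
    push_cast
    module

/-- On `Γ, e 0, …, e (n - 1)`, `B` is the intersection form of a `(-1)`-curve `Γ` meeting the
first curve of a chain of `(-2)`-curves. -/
structure IsSectionChain (B : LinearMap.BilinForm R M) (Γ : M) (e : ℕ → M) (n : ℕ) : Prop where
  isSymm : B.IsSymm
  apply_section_section : B Γ Γ = -1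
  apply_section_chain : ∀ j < n, B Γ (e j) = if j = 0 then 1 else 0
  apply_chain_self : ∀ j < n, B (e j) (e j) = -2
  apply_chain_succ : ∀ j, j + 1 < n → B (e j) (e (j + 1)) = 1
  apply_chain_far : ∀ i j, i + 2 ≤ j → j < n → B (e i) (e j) = 0

namespace IsSectionChain

variable {B : LinearMap.BilinForm R M} {Γ : M} {e : ℕ → M} {n : ℕ}

theorem apply_chainPartialSum_chain (h : IsSectionChain B Γ e n) {i j : ℕ} (hij : i ≤ j)
    (hj : j < n) : B (chainPartialSum Γ e i) (e j) = if j = i then 1 else 0 := by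
  induction i with
  | zero => simpa [chainPartialSum] using h.apply_section_chain j hj
  | succ i ih =>
    rw [chainPartialSum_succ, add_left, ih (by omega), if_neg (by omega), zero_add]
    obtain rfl | hfar := eq_or_lt_of_le hij
    · simp [h.apply_chain_succ i hj]
    · simp [h.apply_chain_far i j hfar hj, hfar.ne']

theorem apply_chainPartialSum_self (h : IsSectionChain B Γ e n) {i : ℕ} (hi : i ≤ n) :
    B (chainPartialSum Γ e i) (chainPartialSum Γ e i) = -1 := by
  induction i with
  | zero => simpa [chainPartialSum] using h.apply_section_section
  | succ i ih =>
    have hFe := h.apply_chainPartialSum_chain le_rfl hi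
    rw [if_pos rfl] at hFe
    rw [chainPartialSum_succ, add_left, add_right, add_right, ih (by omega), hFe,
      h.isSymm.eq (e i), hFe, h.apply_chain_self i hi]
    norm_num

theorem apply_chainPartialSum_of_le (h : IsSectionChain B Γ e n) {i k : ℕ} (hik : i ≤ k)
    (hk : k ≤ n) : B (chainPartialSum Γ e i) (chainPartialSum Γ e k) = if k = i then -1 else 0 := by
  induction k, hik using Nat.le_induction with
  | base => rw [if_pos rfl, h.apply_chainPartialSum_self hk]
  | succ k hik ih =>
    rw [chainPartialSum_succ, add_right, ih (by omega), h.apply_chainPartialSum_chain hik hk,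
      if_neg (show k + 1 ≠ i by omega)]
    split_ifs <;> norm_num

theorem apply_chainPartialSum (h : IsSectionChain B Γ e n) {i k : ℕ} (hi : i ≤ n)
    (hk : k ≤ n) : B (chainPartialSum Γ e i) (chainPartialSum Γ e k) = if i = k then -1 else 0 := by
  rcases le_total i k with hik | hki
  · simp_rw [h.apply_chainPartialSum_of_le hik hk, @eq_comm _ k i]
  · rw [h.isSymm.eq, h.apply_chainPartialSum_of_le hki hi]

theorem apply_sum_chainPartialSum (h : IsSectionChain B Γ e n) :
    B (∑ i ∈ range (n + 1), chainPartialSum Γ e i) (∑ i ∈ range (n + 1), chainPartialSum Γ e i)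
      = -((n : R) + 1) := by
  have hmem : ∀ i ∈ range (n + 1), i ≤ n := fun i hi => Nat.lt_succ_iff.mp (mem_range.mp hi)
  calc _ = ∑ k ∈ range (n + 1), ∑ i ∈ range (n + 1),
        B (chainPartialSum Γ e i) (chainPartialSum Γ e k) := by simp only [sum_left, sum_right]
    _ = ∑ k ∈ range (n + 1), (-1 : R) := sum_congr rfl fun k hk => by
        rw [sum_congr rfl fun i hi => h.apply_chainPartialSum (hmem i hi) (hmem k hk),
          sum_ite_eq', if_pos hk]
    _ = -((n : R) + 1) := by simp [add_comm]

end IsSectionChain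

end

/-- Self-intersection of one summand `(n+1)Γ + Σ_{j=1}^{n} (n−j+1)E_j` of the negative
part of the Zariski–Fujita decomposition of `C + 2K_S`:
`Γ` is a `(-1)`-curve, `E₁,…,Eₙ` a chain of `(-2)`-curves attached to it. -/
theorem stmt_0 {M : Type*} [AddCommGroup M] [Module ℤ M]
    (B : LinearMap.BilinForm ℤ M) (hsymm : B.IsSymm)
    (n : ℕ) (Γ : M) (E : Fin n → M)
    (hΓ : B Γ Γ = -1)
    (hE : ∀ j : Fin n, B (E j) (E j) = -2)
    (hΓE1 : ∀ j : Fin n, (j : ℕ) = 0 → B Γ (E j) = 1)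
    (hΓEj : ∀ j : Fin n, 1 ≤ (j : ℕ) → B Γ (E j) = 0)
    (hadj : ∀ j k : Fin n, ((j : ℕ) + 1 = (k : ℕ) ∨ (k : ℕ) + 1 = (j : ℕ)) →
      B (E j) (E k) = 1)
    (hfar : ∀ j k : Fin n, ((j : ℕ) + 2 ≤ (k : ℕ) ∨ (k : ℕ) + 2 ≤ (j : ℕ)) →
      B (E j) (E k) = 0) :
    B (((n : ℤ) + 1) • Γ + ∑ j : Fin n, ((n : ℤ) - (j : ℕ)) • E j)
      (((n : ℤ) + 1) • Γ + ∑ j : Fin n, ((n : ℤ) - (j : ℕ)) • E j)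
      = -((n : ℤ) + 1) := by
  set e : ℕ → M := fun j => if h : j < n then E ⟨j, h⟩ else 0
  have he_lt : ∀ j (hj : j < n), e j = E ⟨j, hj⟩ := fun j hj => dif_pos hj
  have hchain : IsSectionChain B Γ e n :=
    { isSymm := hsymm
      apply_section_section := hΓ
      apply_section_chain := fun j hj => by
        rw [he_lt j hj]
        split_ifs with h0
        · exact hΓE1 _ h0
        · exact hΓEj _ (Nat.one_le_iff_ne_zero.mpr h0)
      apply_chain_self := fun j hj => by rw [he_lt j hj, hE]
      apply_chain_succ := fun j hj => by
        rw [he_lt j (by omega), he_lt (j + 1) hj, hadj _ _ (Or.inl rfl)]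
      apply_chain_far := fun i j hij hj => by
        rw [he_lt i (by omega), he_lt j hj, hfar _ _ (Or.inl hij)] }
  have hD : ((n : ℤ) + 1) • Γ + ∑ j : Fin n, ((n : ℤ) - (j : ℕ)) • E j
      = ∑ i ∈ range (n + 1), chainPartialSum Γ e i := by
    -- the `•` of the statement is `zsmul`, not the action of the instance `Module ℤ M`
    simp only [← Int.cast_smul_eq_zsmul ℤ, Int.cast_id]
    rw [sum_range_chainPartialSum (R := ℤ), sum_range]
    simp only [fun j : Fin n => he_lt j j.isLt, Fin.eta]
  rw [hD, hchain.apply_sum_chainPartialSum]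
end

section
/- Let M be a module over ℤ with a symmetric bilinear form ⟨·,·⟩. Let s be a natural number, l : Fin s → ℕ, and let Γᵢ ∈ M (for i = 1,…,s) and E_{i,1},…,E_{i,l(i)} ∈ M satisfy: ⟨Γᵢ,Γᵢ⟩ = −1; ⟨E_{i,j},E_{i,j}⟩ = −2; within each chain i, ⟨Γᵢ,E_{i,1}⟩ = 1, ⟨Γᵢ,E_{i,j}⟩ = 0 for j ≥ 2, ⟨E_{i,j},E_{i,k}⟩ = 1 if |j−k| = 1 and 0 if |j−k| ≥ 2; and all pairings between elements belonging to different indices i are zero (⟨Γᵢ,Γₖ⟩ = 0, ⟨Γᵢ,E_{k,j}⟩ = 0, ⟨E_{i,j},E_{k,j'}⟩ = 0 for i ≠ k). Then N₁ := Σ_{i=1}^{s} [ (l(i)+1)·Γᵢ + Σ_{j=1}^{l(i)} (l(i)−j+1)·E_{i,j} ] satisfies ⟨N₁,N₁⟩ = −Σ_{i=1}^{s} (l(i)+1). -/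
/-!
Let `N = (n+1) G + Σⱼ (n-j) eⱼ` be the contribution of one chain. Along the path `G, e₀, …, eₙ₋₁`
its coefficients `n+1, n, …, 1` (and `0` past the end) decrease linearly, so pairing with the
chain, whose Gram matrix is minus the Cartan matrix of type `A`, takes second differences and
gives `N · eₖ = 0` for all `k`, while `N · G = -(n+1) + n = -1`. Hence `N² = (n+1) N · G = -(n+1)`,
and since distinct chains are orthogonal, `N₁²` is the sum of these.
-/

open Finset
open LinearMap (BilinForm)

namespace CartanMatrix

theorem sum_sub_mul_A {n : ℕ} (k : Fin n) :
    ∑ j : Fin n, ((n : ℤ) - (j : ℕ)) * A n j k = if (k : ℕ) = 0 then (n : ℤ) + 1 else 0 := by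
  obtain ⟨k, hk⟩ := k
  have hsplit : ∀ j : ℕ, ((n : ℤ) - j) *
      (if j = k then 2 else if j + 1 = k ∨ k + 1 = j then -1 else 0) =
      (if j = k then 2 * ((n : ℤ) - k) else 0) - (if j + 1 = k then (n : ℤ) - j else 0)
        - (if j = k + 1 then (n : ℤ) - j else 0) := by
    intro j; split_ifs <;> omega
  simp only [A, Matrix.of_apply, Fin.ext_iff]
  rw [Fin.sum_univ_eq_sum_range (fun j => ((n : ℤ) - j) *
      (if j = k then 2 else if j + 1 = k ∨ k + 1 = j then -1 else 0)) n]
  simp only [hsplit, sum_sub_distrib, sum_ite_eq', mem_range]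
  cases k with
  | zero => simp only [Nat.succ_ne_zero, if_false, sum_const_zero]; split_ifs <;> omega
  | succ m =>
    simp only [Nat.add_right_cancel_iff, sum_ite_eq', mem_range, Nat.add_one_ne_zero, if_false]
    split_ifs <;> omega

end CartanMatrix

open CartanMatrix

namespace LinearMap.BilinForm

variable {R M ι : Type*} [CommSemiring R] [AddCommMonoid M] [Module R M]

theorem apply_sum_sum_of_isOrthoᵢ {B : BilinForm R M} {v : ι → M} (h : B.IsOrthoᵢ v)
    (s : Finset ι) : B (∑ i ∈ s, v i) (∑ i ∈ s, v i) = ∑ i ∈ s, B (v i) (v i) := by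
  classical
  simp only [sum_left, sum_right]
  refine sum_congr rfl fun i hi => sum_eq_single_of_mem i hi fun k _ hki => ?_
  exact h hki

end LinearMap.BilinForm

section AttachedChain

variable {M : Type*} [AddCommGroup M] [Module ℤ M] (B : BilinForm ℤ M) {n : ℕ}

structure IsAttachedChain (G : M) (e : Fin n → M) : Prop where
  apply_self : B G G = -1
  apply_e : ∀ j, B G (e j) = if (j : ℕ) = 0 then 1 else 0
  apply_e_e : ∀ j k, B (e j) (e k) = -A n j k

-- The paper's `(l+1)Γ + Σ_{j=1}^{l} (l-j+1)E_j`, with the chain indexed from `0` instead of `1`.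
def chainDivisor (G : M) (e : Fin n → M) : M :=
  ((n : ℤ) + 1) • G + ∑ j : Fin n, ((n : ℤ) - (j : ℕ)) • e j

variable {B} {G : M} {e : Fin n → M}

theorem isAttachedChain_of_apply (hG : B G G = -1) (he : ∀ j, B (e j) (e j) = -2)
    (hGe₀ : ∀ j : Fin n, (j : ℕ) = 0 → B G (e j) = 1)
    (hGe : ∀ j : Fin n, 1 ≤ (j : ℕ) → B G (e j) = 0)
    (hadj : ∀ j k : Fin n, ((j : ℕ) + 1 = (k : ℕ) ∨ (k : ℕ) + 1 = (j : ℕ)) → B (e j) (e k) = 1)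
    (hfar : ∀ j k : Fin n, ((j : ℕ) + 2 ≤ (k : ℕ) ∨ (k : ℕ) + 2 ≤ (j : ℕ)) → B (e j) (e k) = 0) :
    IsAttachedChain B G e where
  apply_self := hG
  apply_e j := by
    split_ifs with hj
    · exact hGe₀ j hj
    · exact hGe j (Nat.one_le_iff_ne_zero.mpr hj)
  apply_e_e j k := by
    simp only [A, Matrix.of_apply]
    split_ifs with hjk hadj'
    · subst hjk; simpa using he j
    · simpa using hadj j k hadj'
    · rw [hfar j k (by omega), neg_zero]

theorem chainDivisor_apply_chainDivisor_eq_zero {m : ℕ} {G' : M} {e' : Fin m → M}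
    (hGG : B G G' = 0) (hGe : ∀ j, B G (e' j) = 0) (heG : ∀ j, B (e j) G' = 0)
    (hee : ∀ j j', B (e j) (e' j') = 0) : B (chainDivisor G e) (chainDivisor G' e') = 0 := by
  simp [chainDivisor, hGG, hGe, heG, hee]

namespace IsAttachedChain

theorem apply_chainDivisor (h : IsAttachedChain B G e) : B G (chainDivisor G e) = -1 := by
  simp only [chainDivisor, map_add, map_zsmul, map_sum, h.apply_self, h.apply_e, smul_eq_mul,
    mul_ite, mul_one, mul_zero]
  rw [Fin.sum_univ_eq_sum_range (fun j => if j = 0 then (n : ℤ) - j else 0)]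
  simp only [sum_ite_eq', mem_range]
  split_ifs <;> omega

theorem chainDivisor_apply_e (h : IsAttachedChain B G e) (k : Fin n) :
    B (chainDivisor G e) (e k) = 0 := by
  simp only [chainDivisor, BilinForm.add_left, BilinForm.sum_left, map_zsmul, LinearMap.smul_apply,
    h.apply_e, h.apply_e_e, smul_eq_mul, mul_neg, sum_neg_distrib, sum_sub_mul_A]
  split_ifs <;> ring

theorem chainDivisor_apply_self (h : IsAttachedChain B G e) (hB : B.IsSymm) :
    B (chainDivisor G e) (chainDivisor G e) = -((n : ℤ) + 1) := by
  conv_lhs => enter [2]; rw [chainDivisor]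
  simp only [map_add, map_zsmul, map_sum, h.chainDivisor_apply_e, ← hB.eq G, h.apply_chainDivisor,
    smul_eq_mul, mul_zero, sum_const_zero, add_zero]
  ring

end IsAttachedChain

end AttachedChain

/-- Self-intersection of the negative part
`N₁ = Σᵢ [(l(i)+1)Γᵢ + Σ_{j=1}^{l(i)} (l(i)−j+1)E_{i,j}]`
of the Zariski–Fujita decomposition of `C + 2K_S`:
the `Γᵢ` are disjoint `(-1)`-curves, each with a chain of `(-2)`-curves
`E_{i,1},…,E_{i,l(i)}` attached, chains with different indices being disjoint.
Then `N₁² = −Σᵢ (l(i)+1)`. -/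
theorem stmt_1 {M : Type*} [AddCommGroup M] [Module ℤ M]
    (B : LinearMap.BilinForm ℤ M) (hsymm : B.IsSymm)
    (s : ℕ) (l : Fin s → ℕ) (Γ : Fin s → M) (E : (i : Fin s) → Fin (l i) → M)
    (hΓ : ∀ i, B (Γ i) (Γ i) = -1)
    (hE : ∀ i, ∀ j : Fin (l i), B (E i j) (E i j) = -2)
    (hΓE1 : ∀ i, ∀ j : Fin (l i), (j : ℕ) = 0 → B (Γ i) (E i j) = 1)
    (hΓEj : ∀ i, ∀ j : Fin (l i), 1 ≤ (j : ℕ) → B (Γ i) (E i j) = 0)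
    (hadj : ∀ i, ∀ j k : Fin (l i),
      ((j : ℕ) + 1 = (k : ℕ) ∨ (k : ℕ) + 1 = (j : ℕ)) → B (E i j) (E i k) = 1)
    (hfar : ∀ i, ∀ j k : Fin (l i),
      ((j : ℕ) + 2 ≤ (k : ℕ) ∨ (k : ℕ) + 2 ≤ (j : ℕ)) → B (E i j) (E i k) = 0)
    (hΓΓ : ∀ i k : Fin s, i ≠ k → B (Γ i) (Γ k) = 0)
    (hΓE : ∀ i k : Fin s, i ≠ k → ∀ j : Fin (l k), B (Γ i) (E k j) = 0)
    (hEE : ∀ i k : Fin s, i ≠ k → ∀ (j : Fin (l i)) (j' : Fin (l k)),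
      B (E i j) (E k j') = 0) :
    B (∑ i : Fin s, (((l i : ℤ) + 1) • Γ i +
        ∑ j : Fin (l i), ((l i : ℤ) - (j : ℕ)) • E i j))
      (∑ i : Fin s, (((l i : ℤ) + 1) • Γ i +
        ∑ j : Fin (l i), ((l i : ℤ) - (j : ℕ)) • E i j))
      = -(∑ i : Fin s, ((l i : ℤ) + 1)) := by
  have hchain : ∀ i, IsAttachedChain B (Γ i) (E i) := fun i =>
    isAttachedChain_of_apply (hΓ i) (hE i) (hΓE1 i) (hΓEj i) (hadj i) (hfar i)
  have hortho : B.IsOrthoᵢ fun i => chainDivisor (Γ i) (E i) := fun i k hik =>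
    chainDivisor_apply_chainDivisor_eq_zero (hΓΓ i k hik) (hΓE i k hik)
      (fun j => by rw [← hsymm.eq]; exact hΓE k i hik.symm j) (hEE i k hik)
  calc _ = ∑ i, B (chainDivisor (Γ i) (E i)) (chainDivisor (Γ i) (E i)) :=
        BilinForm.apply_sum_sum_of_isOrthoᵢ hortho univ
    _ = _ := by simp only [fun i => (hchain i).chainDivisor_apply_self hsymm, sum_neg_distrib]
end

section
/- Let a, b be real numbers with b > 0 and a ≥ 5b, and define q(x) = (a − 4b)x² − (a − 2b)x + (2b + 2). If x is a real number with q(x) = 0, then either 0 < x < 1 or 1 < x < 2. -/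
/-!
Since `q 1 = 2`, `x = 1` is never a root. For `x ≤ 0` all three terms of `q x` are nonnegative
and the constant term is positive. At `x = 2` the value `2a - 10b + 2`, the slope `3a - 14b` and
the leading coefficient `a - 4b` are all positive when `a ≥ 5b ≥ 0`, so the Taylor expansion of
`q` at `2` is positive on `[2, ∞)`.
-/

namespace Prop51

def q (a b x : ℝ) : ℝ := (a - 4 * b) * x ^ 2 - (a - 2 * b) * x + (2 * b + 2)

variable {a b : ℝ}

@[simp]
lemma q_one : q a b 1 = 2 := by
  simp only [q]; ring

lemma q_eq_taylor_two (x : ℝ) :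
    q a b x = (2 * a - 10 * b + 2) + (3 * a - 14 * b) * (x - 2) + (a - 4 * b) * (x - 2) ^ 2 := by
  simp only [q]; ring

lemma q_pos_of_nonpos (hb : 0 ≤ b) (hab : 5 * b ≤ a) {x : ℝ} (hx : x ≤ 0) : 0 < q a b x := by
  have hlead : 0 ≤ (a - 4 * b) * x ^ 2 := mul_nonneg (by linarith) (sq_nonneg x)
  have hlin : 0 ≤ (a - 2 * b) * -x := mul_nonneg (by linarith) (neg_nonneg.2 hx)
  simp only [q]
  linarith

lemma q_pos_of_two_le (hb : 0 ≤ b) (hab : 5 * b ≤ a) {x : ℝ} (hx : 2 ≤ x) : 0 < q a b x := by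
  have hlin : 0 ≤ (3 * a - 14 * b) * (x - 2) := mul_nonneg (by linarith) (by linarith)
  have hquad : 0 ≤ (a - 4 * b) * (x - 2) ^ 2 := mul_nonneg (by linarith) (sq_nonneg _)
  rw [q_eq_taylor_two]
  linarith

lemma mem_of_q_eq_zero (hb : 0 ≤ b) (hab : 5 * b ≤ a) {x : ℝ} (hx : q a b x = 0) :
    x ∈ Set.Ioo 0 1 ∪ Set.Ioo 1 2 := by
  have hx0 : 0 < x := by
    by_contra! h
    exact (q_pos_of_nonpos hb hab h).ne' hx
  have hx2 : x < 2 := by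
    by_contra! h
    exact (q_pos_of_two_le hb hab h).ne' hx
  have hx1 : x ≠ 1 := by
    rintro rfl
    norm_num at hx
  rcases hx1.lt_or_gt with h | h
  · exact Or.inl ⟨hx0, h⟩
  · exact Or.inr ⟨h, hx2⟩

end Prop51

/-- Proposition 5.1 (ii): with `b > 0` and `a ≥ 5b`, any real root of the quadratic
`q(x) = (a−4b)x² − (a−2b)x + (2b+2)` lies in `(0,1) ∪ (1,2)`. -/
theorem stmt_7 (a b : ℝ) (hb : b > 0) (hab : a ≥ 5 * b)
    (q : ℝ → ℝ)
    (hq : ∀ x : ℝ, q x = (a - 4 * b) * x ^ 2 - (a - 2 * b) * x + (2 * b + 2))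
    (x : ℝ) (hx : q x = 0) :
    (0 < x ∧ x < 1) ∨ (1 < x ∧ x < 2) := by
  have hroot : Prop51.q a b x = 0 := by rw [Prop51.q, ← hq, hx]
  exact Prop51.mem_of_q_eq_zero hb.le hab hroot
end

section
/- There do not exist integers d, d₀, l₀₁, l₀₂, m₀ with d ≥ 12, d₀ ≥ 1, l₀₁ ≥ 0, l₀₂ ≥ 0, m₀ ≥ 0 satisfying simultaneously: d₀² − l₀₁ − l₀₂ − 4m₀ = −1, d₀² − 3d₀ + 2 = 2m₀, and d₀·d − l₀₁ − 2l₀₂ − 4m₀ = 0. -/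
theorem l₀₁_eq_of_numerical_conditions {d d₀ l₀₁ l₀₂ m₀ : ℤ}
    (hself : d₀ ^ 2 - l₀₁ - l₀₂ - 4 * m₀ = -1) (hgenus : d₀ ^ 2 - 3 * d₀ + 2 = 2 * m₀)
    (hfiber : d₀ * d - l₀₁ - 2 * l₀₂ - 4 * m₀ = 0) :
    l₀₁ = d₀ * (6 - d) - 2 := by
  linear_combination -2 * hself + 2 * hgenus + hfiber

/-- Section 4: a nodal pencil of plane curves of degree `d ≥ 12` gives a relatively
minimal fibration: there is no component `D₀` of degree `d₀ ≥ 1` whose proper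
transform is a vertical `(−1)`-curve, i.e. the system of three numerical equations
has no solution. -/
theorem stmt_12 :
    ¬ ∃ d d₀ l₀₁ l₀₂ m₀ : ℤ, 12 ≤ d ∧ 1 ≤ d₀ ∧ 0 ≤ l₀₁ ∧ 0 ≤ l₀₂ ∧ 0 ≤ m₀ ∧
      d₀ ^ 2 - l₀₁ - l₀₂ - 4 * m₀ = -1 ∧
      d₀ ^ 2 - 3 * d₀ + 2 = 2 * m₀ ∧
      d₀ * d - l₀₁ - 2 * l₀₂ - 4 * m₀ = 0 := by
  rintro ⟨d, d₀, l₀₁, l₀₂, m₀, hd, hd₀, hl₀₁, -, -, hself, hgenus, hfiber⟩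
  have hl₀₁_eq := l₀₁_eq_of_numerical_conditions hself hgenus hfiber
  have hpos : 0 < d₀ * (d - 6) := mul_pos (by omega) (by omega)
  linarith
end
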